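/- Let G be a finite group and N a normal subgroup of G such that Π(N) is connected and G/N is solvable. Then Π(G) is connected. -/

import Mathlib

/-!
The image of a subgroup `H` in the solvable group `G ⧸ N` is solvable, and a nontrivial finite
solvable group has a subgroup of prime index (a maximal subgroup containing the commutator
subgroup is normal, so its quotient is generated by any element of prime order). Pulling such a
subgroup back into `H` gives a neighbour of `H` in `Π(G)` that still contains `H ⊓ N`, so `H` is
joined to `H ⊓ N`. Finally `Π(N)` embeds into `Π(G)`, which joins `H ⊓ N` to `K ⊓ N`.
-/

/-- The prime index graph of a group: vertices are subgroups, two distinct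
subgroups are adjacent iff one is contained in the other with prime index. -/
def primeIndexGraph (G : Type*) [Group G] : SimpleGraph (Subgroup G) :=
  SimpleGraph.fromRel (fun H K => H ≤ K ∧ (H.relIndex K).Prime)

namespace Subgroup

variable {G : Type*} [Group G]

theorem index_prime_of_isCoatom {M : Subgroup G} [M.Normal] [Finite (G ⧸ M)]
    (hM : IsCoatom M) : M.index.Prime := by
  have hne : Nat.card (G ⧸ M) ≠ 1 := by
    rw [← index_eq_card, Ne, index_eq_one]; exact hM.1
  obtain ⟨p, hp, hpdvd⟩ := Nat.exists_prime_and_dvd hne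
  have : Fact p.Prime := ⟨hp⟩
  obtain ⟨y, hy⟩ := exists_prime_orderOf_dvd_card' p hpdvd
  obtain ⟨g, rfl⟩ := QuotientGroup.mk'_surjective M y
  have hcomap : (zpowers (QuotientGroup.mk' M g)).comap (QuotientGroup.mk' M) = ⊤ := by
    refine hM.lt_iff.mp (lt_of_le_of_ne (QuotientGroup.le_comap_mk' M _) fun h => ?_)
    have hg : g ∈ M := h ▸ mem_comap.mpr (mem_zpowers _)
    have hg1 : QuotientGroup.mk' M g = 1 := (QuotientGroup.eq_one_iff g).mpr hg
    rw [hg1, orderOf_one] at hy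
    exact hp.ne_one hy.symm
  have htop : (zpowers (QuotientGroup.mk' M g)).index = 1 := by
    rw [← index_comap_of_surjective _ (QuotientGroup.mk'_surjective M), hcomap, index_top]
  rwa [index_eq_card, ← card_mul_index, htop, mul_one, Nat.card_zpowers, hy]

theorem exists_index_prime_of_isSolvable [Finite G] [Nontrivial G] [Group.IsSolvable G] :
    ∃ M : Subgroup G, M.index.Prime := by
  obtain ⟨M, hM, hle⟩ := (eq_top_or_exists_le_coatom (_root_.commutator G)).resolve_left
    (Group.IsSolvable.commutator_lt_top_of_nontrivial G).ne
  have := Normal.of_commutator_le G hle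
  exact ⟨M, index_prime_of_isCoatom hM⟩

theorem exists_relIndex_prime_of_not_le_ker {Q : Type*} [Group Q] [Group.IsSolvable Q]
    (f : G →* Q) {H : Subgroup G} [Finite H] (hH : ¬H ≤ f.ker) :
    ∃ K ≤ H, H ⊓ f.ker ≤ K ∧ (K.relIndex H).Prime := by
  set S := H.map f
  have : Finite S := Finite.of_surjective _ (f.subgroupMap_surjective H)
  have : Nontrivial S := (nontrivial_iff_ne_bot S).mpr (by rwa [Ne, map_eq_bot_iff])
  obtain ⟨M, hM⟩ := exists_index_prime_of_isSolvable (G := S)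
  have hMS : (M.map S.subtype).relIndex S = M.index := by
    have := relIndex_map_map_of_injective M ⊤ S.subtype_injective
    rwa [← MonoidHom.range_eq_map, range_subtype, relIndex_top_right] at this
  refine ⟨H ⊓ (M.map S.subtype).comap f, inf_le_left, inf_le_inf_left _ (f.ker_le_comap _), ?_⟩
  rwa [inf_relIndex_left, relIndex_comap, hMS]

end Subgroup

namespace primeIndexGraph

variable {G : Type*} [Group G]

theorem adj_iff {H K : Subgroup G} : (primeIndexGraph G).Adj H K ↔
    H ≠ K ∧ (H ≤ K ∧ (H.relIndex K).Prime ∨ K ≤ H ∧ (K.relIndex H).Prime) :=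
  SimpleGraph.fromRel_adj _ _ _

theorem adj_of_relIndex_prime {H K : Subgroup G} (hle : H ≤ K) (hp : (H.relIndex K).Prime) :
    (primeIndexGraph G).Adj H K :=
  adj_iff.mpr ⟨fun h => Nat.not_prime_one (by rwa [h, Subgroup.relIndex_self] at hp),
    Or.inl ⟨hle, hp⟩⟩

@[simps]
def mapOfInjective {G' : Type*} [Group G'] (f : G →* G') (hf : Function.Injective f) :
    primeIndexGraph G →g primeIndexGraph G' where
  toFun H := H.map f
  map_rel' {H K} hHK := by
    obtain ⟨hne, h⟩ := adj_iff.mp hHK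
    refine adj_iff.mpr ⟨(Subgroup.map_injective hf).ne hne, ?_⟩
    simpa only [Subgroup.map_le_map_iff_of_injective hf,
      Subgroup.relIndex_map_map_of_injective _ _ hf] using h

theorem reachable_inf_ker [Finite G] {Q : Type*} [Group Q] [Group.IsSolvable Q] (f : G →* Q)
    (H : Subgroup G) : (primeIndexGraph G).Reachable (H ⊓ f.ker) H := by
  induction H using WellFoundedLT.induction with
  | _ H ih =>
    by_cases hH : H ≤ f.ker
    · rw [inf_eq_left.mpr hH]
    obtain ⟨K, hKH, hK, hp⟩ := Subgroup.exists_relIndex_prime_of_not_le_ker f hH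
    have hKH' : K < H := lt_of_le_of_ne hKH fun h =>
      Nat.not_prime_one (by rwa [h, Subgroup.relIndex_self] at hp)
    have hker : K ⊓ f.ker = H ⊓ f.ker :=
      le_antisymm (inf_le_inf_right _ hKH) (le_inf hK inf_le_right)
    exact hker ▸ (ih K hKH').trans (adj_of_relIndex_prime hKH hp).reachable

end primeIndexGraph

theorem primeIndexGraph_connected_of_solvable_quotient (G : Type*) [Group G]
    [Fintype G] (N : Subgroup G) [N.Normal]
    (h1 : (primeIndexGraph N).Connected) (h2 : IsSolvable (G ⧸ N)) :
    (primeIndexGraph G).Connected := by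
  have : Group.IsSolvable (G ⧸ N) := h2
  have hN (H : Subgroup G) : (primeIndexGraph G).Reachable (H ⊓ N) H := by
    simpa only [QuotientGroup.ker_mk'] using
      primeIndexGraph.reachable_inf_ker (QuotientGroup.mk' N) H
  refine ⟨fun H K => ?_⟩
  have hHK : (primeIndexGraph G).Reachable (H ⊓ N) (K ⊓ N) := by
    simpa only [primeIndexGraph.mapOfInjective_apply, Subgroup.subgroupOf_map_subtype] using
      (h1.preconnected (H.subgroupOf N) (K.subgroupOf N)).map
        (primeIndexGraph.mapOfInjective N.subtype N.subtype_injective)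
  exact (hN H).symm.trans (hHK.trans (hN K))
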